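/- In a finite tree, all longest simple paths have the same set of central vertices; that is, if v_1,…,v_n and w_1,…,w_m are two longest simple paths (so n = m), then {v_i : i ∈ {⌈(n+1)/2⌉, ⌊(n+1)/2⌋}} = {w_i : i ∈ {⌈(n+1)/2⌉, ⌊(n+1)/2⌋}}. Consequently, a finite tree has at most two central vertices. -/

import Mathlib

/-
In a tree every path is a geodesic, and any three vertices `a, b, c` have a median: a vertex on
the `a`–`b` path through which the geodesics from `c` to `a` and to `b` both pass. On a longest
path `p` of length `L`, whose length is therefore the diameter, the median shows that a vertex at
position `k` is within `max k (L - k)` of every vertex, and that a vertex within `⌈L/2⌉` of both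
ends of `p` lies on `p` at position `⌊L/2⌋` or `⌈L/2⌉`. So the central vertices of every longest
path are exactly the vertices of eccentricity at most `⌈L/2⌉`, a set that does not depend on `p`.
-/

/-- The central vertices of a simple path `v_1, …, v_n` (1-indexed) are the vertices
`v_i` with `i ∈ {⌈(n+1)/2⌉, ⌊(n+1)/2⌋}`.  Here `n = p.support.length`, and in `ℕ` we
have `⌈(n+1)/2⌉ = (n+2)/2` and `⌊(n+1)/2⌋ = (n+1)/2`. -/
def centralVertices {V : Type} {G : SimpleGraph V} {a b : V} (p : G.Walk a b) : Set V :=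
  { v | ∃ i : ℕ,
      (i = (p.support.length + 2) / 2 ∨ i = (p.support.length + 1) / 2) ∧
      ∃ h : i - 1 < p.support.length, p.support.get ⟨i - 1, h⟩ = v }

/-- A longest simple path: a path of maximum length (number of vertices) among all
simple paths of the graph. -/
def IsLongestPath {V : Type} (G : SimpleGraph V) {a b : V} (p : G.Walk a b) : Prop :=
  p.IsPath ∧ ∀ (x y : V) (q : G.Walk x y), q.IsPath → q.support.length ≤ p.support.length

/-- A vertex is central in the graph if it is central in some longest simple path. -/
def IsCentral {V : Type} (G : SimpleGraph V) (v : V) : Prop :=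
  ∃ (a b : V) (p : G.Walk a b), IsLongestPath G p ∧ v ∈ centralVertices p

namespace SimpleGraph

variable {V : Type*} {G : SimpleGraph V} {a b c u v w : V}

namespace Walk

theorem IsPath.append {p : G.Walk u v} {q : G.Walk v w} (hp : p.IsPath) (hq : q.IsPath)
    (h : ∀ x ∈ p.support, x ∈ q.support → x = v) : (p.append q).IsPath := by
  have hq' := hq.support_nodup
  rw [← cons_tail_support q, List.nodup_cons] at hq'
  rw [isPath_def, support_append]
  refine hp.support_nodup.append hq'.2 fun x hxp hxq => ?_
  have hxv : x = v := h x hxp (cons_tail_support q ▸ List.mem_cons_of_mem _ hxq)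
  exact hq'.1 (hxv ▸ hxq)

theorem exists_isPath_meeting_set_only_at_end (S : Set V) (q : G.Walk u v) (hv : v ∈ S) :
    ∃ w ∈ S, ∃ r : G.Walk u w, r.IsPath ∧ ∀ x ∈ r.support, x ∈ S → x = w := by
  classical
  suffices ∃ w ∈ S, ∃ r : G.Walk u w, ∀ x ∈ r.support, x ∈ S → x = w by
    obtain ⟨w, hw, r, hr⟩ := this
    exact ⟨w, hw, r.bypass, r.bypass_isPath,
      fun x hx => hr x (r.support_bypass_subset_support hx)⟩
  induction q with
  | nil => exact ⟨_, hv, nil, by simp⟩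
  | @cons u' _ _ hadj q ih =>
    by_cases hu : u' ∈ S
    · exact ⟨u', hu, nil, by simp⟩
    obtain ⟨w, hw, r, hr⟩ := ih hv
    refine ⟨w, hw, cons hadj r, ?_⟩
    intro x hx hxS
    rcases List.mem_cons.mp hx with rfl | hx
    · exact absurd hxS hu
    · exact hr x hx hxS

end Walk

theorem IsAcyclic.length_eq_dist (hG : G.IsAcyclic) {p : G.Walk u v} (hp : p.IsPath) :
    p.length = G.dist u v := by
  obtain ⟨q, hq, hlen⟩ := p.reachable.exists_path_of_dist
  have : p = q := congrArg Subtype.val ((hG.subsingleton_path u v).elim ⟨p, hp⟩ ⟨q, hq⟩)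
  rw [this, hlen]

theorem IsAcyclic.dist_getVert_getVert (hG : G.IsAcyclic) {p : G.Walk u v} (hp : p.IsPath)
    {i j : ℕ} (hij : i ≤ j) (hj : j ≤ p.length) :
    G.dist (p.getVert i) (p.getVert j) = j - i := by
  have h := length_eq_dist_of_subwalk (hG.length_eq_dist hp)
    (((p.take j).isSubwalk_drop i).trans (p.isSubwalk_take j))
  simp only [Walk.take_getVert, Walk.drop_length, Walk.take_length, Nat.min_eq_right hij,
    Nat.min_eq_left hj] at h
  exact h.symm

theorem IsTree.getVert_dist_of_dist_add_dist_eq {p : G.Walk a b} (hG : G.IsTree) (hp : p.IsPath)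
    (h : G.dist a v + G.dist v b = G.dist a b) : p.getVert (G.dist a v) = v := by
  obtain ⟨r₁, -, hr₁⟩ := hG.connected.exists_path_of_dist a v
  obtain ⟨r₂, -, hr₂⟩ := hG.connected.exists_path_of_dist v b
  have hgeod : (r₁.append r₂).IsPath :=
    Walk.isPath_of_length_eq_dist _ (by rw [Walk.length_append, hr₁, hr₂, h])
  have : p = r₁.append r₂ :=
    congrArg Subtype.val ((hG.isAcyclic.subsingleton_path a b).elim ⟨p, hp⟩ ⟨_, hgeod⟩)
  rw [this, Walk.getVert_append, ← hr₁]
  simp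

theorem IsTree.exists_median (hG : G.IsTree) (a b c : V) :
    ∃ w, G.dist a w + G.dist w b = G.dist a b ∧ G.dist c w + G.dist w a = G.dist c a ∧
      G.dist c w + G.dist w b = G.dist c b := by
  classical
  obtain ⟨p, hp, -⟩ := hG.connected.exists_path_of_dist a b
  obtain ⟨w, hw, r, hr, hmeet⟩ := ((hG.connected c a).some).exists_isPath_meeting_set_only_at_end
    {x | x ∈ p.support} p.start_mem_support
  set t := p.takeUntil w hw
  set s := p.dropUntil w hw
  have hct : (r.append t.reverse).IsPath := hr.append (hp.takeUntil hw).reverse fun x hxr hxt =>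
    hmeet x hxr (p.support_takeUntil_subset_support hw (by simpa using hxt))
  have hcs : (r.append s).IsPath := hr.append (hp.dropUntil hw) fun x hxr hxs =>
    hmeet x hxr (p.support_dropUntil_subset_support hw hxs)
  have hab : t.length + s.length = G.dist a b := by
    rw [← Walk.length_append, p.take_spec hw, hG.isAcyclic.length_eq_dist hp]
  have hca := hG.isAcyclic.length_eq_dist hct
  have hcb := hG.isAcyclic.length_eq_dist hcs
  rw [Walk.length_append, Walk.length_reverse] at hca
  rw [Walk.length_append] at hcb
  have hcw : r.length = G.dist c w := hG.isAcyclic.length_eq_dist hr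
  have haw : t.length = G.dist a w := hG.isAcyclic.length_eq_dist (hp.takeUntil hw)
  have hwb : s.length = G.dist w b := hG.isAcyclic.length_eq_dist (hp.dropUntil hw)
  have hwa : G.dist w a = G.dist a w := dist_comm
  exact ⟨w, by omega, by omega, by omega⟩

theorem IsTree.dist_getVert_le {p : G.Walk a b} (hG : G.IsTree) (hp : p.IsPath)
    (hdiam : ∀ x y, G.dist x y ≤ p.length) {k : ℕ} (hk : k ≤ p.length) (u : V) :
    G.dist (p.getVert k) u ≤ max k (p.length - k) := by
  obtain ⟨w, hab, hua, hub⟩ := hG.exists_median a b u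
  have hL := hG.isAcyclic.length_eq_dist hp
  have hw : p.getVert (G.dist a w) = w := hG.getVert_dist_of_dist_add_dist_eq hp hab
  have hkw : G.dist (p.getVert k) (p.getVert (G.dist a w)) ≤
      max (k - G.dist a w) (G.dist a w - k) := by
    rcases le_total k (G.dist a w) with h | h
    · rw [hG.isAcyclic.dist_getVert_getVert hp h (by omega)]
      omega
    · rw [dist_comm, hG.isAcyclic.dist_getVert_getVert hp h hk]
      omega
  rw [hw] at hkw
  have := hG.connected.dist_triangle (u := p.getVert k) (v := w) (w := u)
  have := hdiam u a
  have := hdiam u b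
  have : G.dist w u = G.dist u w := dist_comm
  have : G.dist w a = G.dist a w := dist_comm
  omega

theorem IsTree.getVert_eq_of_dist_le {p : G.Walk a b} (hG : G.IsTree) (hp : p.IsPath)
    (ha : G.dist a v ≤ (p.length + 1) / 2) (hb : G.dist v b ≤ (p.length + 1) / 2) :
    p.getVert (p.length / 2) = v ∨ p.getVert ((p.length + 1) / 2) = v := by
  obtain ⟨w, hab, hva, hvb⟩ := hG.exists_median a b v
  have hL := hG.isAcyclic.length_eq_dist hp
  have : G.dist a v = G.dist v a := dist_comm
  have : G.dist w a = G.dist a w := dist_comm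
  obtain rfl : v = w := hG.connected.dist_eq_zero_iff.mp (by omega)
  have hv := hG.getVert_dist_of_dist_add_dist_eq hp hab
  rcases (by omega : G.dist a v = p.length / 2 ∨ G.dist a v = (p.length + 1) / 2) with h | h
  · exact .inl (h ▸ hv)
  · exact .inr (h ▸ hv)

end SimpleGraph

open SimpleGraph

section

variable {V : Type} {G : SimpleGraph V} {a b c d : V}

theorem mem_centralVertices_iff {p : G.Walk a b} {v : V} :
    v ∈ centralVertices p ↔ p.getVert (p.length / 2) = v ∨ p.getVert ((p.length + 1) / 2) = v := by
  simp only [centralVertices, Set.mem_ofPred_eq, List.get_eq_getElem,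
    Walk.support_getElem_eq_getVert, Walk.length_support]
  constructor
  · rintro ⟨i, hi | hi, -, rfl⟩
    · exact .inr (by congr 1; omega)
    · exact .inl (by congr 1; omega)
  · rintro (rfl | rfl)
    · exact ⟨(p.length + 2) / 2, .inr (by omega), by omega, by congr 1; omega⟩
    · exact ⟨(p.length + 3) / 2, .inl (by omega), by omega, by congr 1; omega⟩

theorem ncard_centralVertices_le_two (p : G.Walk a b) : (centralVertices p).ncard ≤ 2 := by
  have hsub : centralVertices p ⊆ {p.getVert (p.length / 2), p.getVert ((p.length + 1) / 2)} :=
    fun v hv => by rcases mem_centralVertices_iff.mp hv with rfl | rfl <;> simp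
  calc (centralVertices p).ncard
      ≤ ({p.getVert (p.length / 2), p.getVert ((p.length + 1) / 2)} : Set V).ncard :=
        Set.ncard_le_ncard hsub (Set.toFinite _)
    _ ≤ 2 := (Set.ncard_insert_le _ _).trans (by simp)

theorem IsLongestPath.length_eq {p : G.Walk a b} {q : G.Walk c d} (hp : IsLongestPath G p)
    (hq : IsLongestPath G q) : p.length = q.length := by
  have hpq := hp.2 c d q hq.1
  have hqp := hq.2 a b p hp.1
  rw [Walk.length_support, Walk.length_support] at hpq hqp
  omega

theorem IsLongestPath.dist_le_length {p : G.Walk a b} (hG : G.Connected)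
    (hp : IsLongestPath G p) (x y : V) : G.dist x y ≤ p.length := by
  obtain ⟨r, hr, hlen⟩ := hG.exists_path_of_dist x y
  have := hp.2 x y r hr
  rw [r.length_support, p.length_support] at this
  omega

theorem SimpleGraph.IsTree.centralVertices_eq {p : G.Walk a b} (hG : G.IsTree) (hp : p.IsPath)
    (hdiam : ∀ x y, G.dist x y ≤ p.length) :
    centralVertices p = {v | ∀ u, G.dist v u ≤ (p.length + 1) / 2} := by
  ext v
  rw [mem_centralVertices_iff, Set.mem_ofPred_eq]
  constructor
  · rintro (rfl | rfl) u <;> exact (hG.dist_getVert_le hp hdiam (by omega) u).trans (by omega)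
  · intro hv
    exact hG.getVert_eq_of_dist_le hp (dist_comm ▸ hv a) (hv b)

end

theorem central_vertices_unique_and_at_most_two_general {V : Type} (G : SimpleGraph V)
    (hG : G.IsTree) :
    (∀ {a b c d : V} (p : G.Walk a b) (q : G.Walk c d),
        IsLongestPath G p → IsLongestPath G q → centralVertices p = centralVertices q) ∧
    {v : V | IsCentral G v}.ncard ≤ 2 := by
  have unique : ∀ {a b c d : V} (p : G.Walk a b) (q : G.Walk c d),
      IsLongestPath G p → IsLongestPath G q → centralVertices p = centralVertices q := by
    intro a b c d p q hp hq
    rw [hG.centralVertices_eq hp.1 (hp.dist_le_length hG.connected),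
      hG.centralVertices_eq hq.1 (hq.dist_le_length hG.connected), hp.length_eq hq]
  refine ⟨unique, ?_⟩
  obtain h | ⟨-, a, b, p, hp, -⟩ := {v | IsCentral G v}.eq_empty_or_nonempty
  · simp [h]
  have hcentral : {v | IsCentral G v} = centralVertices p := by
    ext v
    exact ⟨fun ⟨_, _, q, hq, hv⟩ => unique q p hq hp ▸ hv, fun hv => ⟨a, b, p, hp, hv⟩⟩
  exact hcentral ▸ ncard_centralVertices_le_two p

/-- In a finite tree, all longest simple paths have the same set of central vertices;
consequently, a finite tree has at most two central vertices. -/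
theorem central_vertices_unique_and_at_most_two {V : Type} [Fintype V] (G : SimpleGraph V)
    (hG : G.IsTree) :
    (∀ {a b c d : V} (p : G.Walk a b) (q : G.Walk c d),
        IsLongestPath G p → IsLongestPath G q → centralVertices p = centralVertices q) ∧
    {v : V | IsCentral G v}.ncard ≤ 2 :=
  central_vertices_unique_and_at_most_two_general G hG
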